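/- Let N = 3 and θ = (0, 2π/3, 4π/3) (the regular 3-gon). Then the Hessian of V at θ has every off-diagonal entry equal to 1/6 and every diagonal entry equal to −1/3, and its eigenvalues are 0, −1/2, −1/2; in particular the Hessian is negative semidefinite with one-dimensional kernel spanned by (1,1,1), so the 3-gon is a nondegenerate local maximum of V. -/

import Mathlib

open Real Finset Matrix

/-- The limit potential of the (1+N)-vortex problem:
`V(θ) = -∑_{i<j} (cos(θᵢ-θⱼ) + (1/2)·log(2 - 2cos(θᵢ-θⱼ)))`. -/
noncomputable def vortexPotential (N : ℕ) (θ : Fin N → ℝ) : ℝ :=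
  - ∑ i : Fin N, ∑ j : Fin N,
      if i < j then
        Real.cos (θ i - θ j) + (1 / 2) * Real.log (2 - 2 * Real.cos (θ i - θ j))
      else 0

/-- The Hessian matrix of the potential `V` at `θ`. -/
noncomputable def vortexHessian (N : ℕ) (θ : Fin N → ℝ) : Matrix (Fin N) (Fin N) ℝ :=
  fun i j => iteratedFDeriv ℝ 2 (vortexPotential N) θ ![Pi.single i 1, Pi.single j 1]

/-! Writing `V θ = -∑_{i<j} h (θᵢ - θⱼ)` with `h t = cos t + ½ log (2 - 2 cos t)`, the Hessian
form of `V` is `(u, v) ↦ -∑_{i<j} h'' (θᵢ - θⱼ) (uᵢ - uⱼ) (vᵢ - vⱼ)`, where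
`h'' t = -cos t - 1 / (2 - 2 cos t)`. For the regular 3-gon every `cos (θᵢ - θⱼ)` is `-1/2`, so
`h'' = 1/2 - 1/3 = 1/6` on every pair and the Hessian is `J/6 - I/2` (`J` the all-ones matrix):
it kills `(1,1,1)` and acts as `-1/2` on the plane `∑ vᵢ = 0`. -/

noncomputable def pairPotential (t : ℝ) : ℝ := cos t + 1 / 2 * log (2 - 2 * cos t)

noncomputable def pairPotentialDeriv (t : ℝ) : ℝ := -sin t + sin t / (2 - 2 * cos t)

noncomputable def pairPotentialDeriv2 (t : ℝ) : ℝ := -cos t - 1 / (2 - 2 * cos t)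

lemma two_sub_two_mul_cos_ne_zero {t : ℝ} (ht : cos t ≠ 1) : 2 - 2 * cos t ≠ 0 := by
  contrapose! ht; linarith

lemma hasDerivAt_two_sub_two_mul_cos (t : ℝ) :
    HasDerivAt (fun s => 2 - 2 * cos s) (2 * sin t) t := by
  simpa using ((hasDerivAt_cos t).const_mul 2).const_sub 2

lemma hasDerivAt_pairPotential {t : ℝ} (ht : cos t ≠ 1) :
    HasDerivAt pairPotential (pairPotentialDeriv t) t := by
  have hlog := ((hasDerivAt_two_sub_two_mul_cos t).log (two_sub_two_mul_cos_ne_zero ht))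
  refine ((hasDerivAt_cos t).add (hlog.const_mul (1 / 2))).congr_deriv ?_
  unfold pairPotentialDeriv
  field_simp

lemma hasDerivAt_pairPotentialDeriv {t : ℝ} (ht : cos t ≠ 1) :
    HasDerivAt pairPotentialDeriv (pairPotentialDeriv2 t) t := by
  have hne := two_sub_two_mul_cos_ne_zero ht
  refine ((hasDerivAt_sin t).neg.add
    ((hasDerivAt_sin t).div (hasDerivAt_two_sub_two_mul_cos t) hne)).congr_deriv ?_
  unfold pairPotentialDeriv2
  field_simp
  linear_combination -sin_sq_add_cos_sq t

section

variable {N : ℕ}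

def coordDiff (i j : Fin N) : (Fin N → ℝ) →L[ℝ] ℝ :=
  (ContinuousLinearMap.proj i : (Fin N → ℝ) →L[ℝ] ℝ) - ContinuousLinearMap.proj j

@[simp] lemma coordDiff_apply (i j : Fin N) (x : Fin N → ℝ) : coordDiff i j x = x i - x j := rfl

lemma hasFDerivAt_coordDiff (i j : Fin N) (x : Fin N → ℝ) :
    HasFDerivAt (fun y : Fin N → ℝ => y i - y j) (coordDiff i j) x :=
  (coordDiff i j).hasFDerivAt

def vortexDomain (N : ℕ) : Set (Fin N → ℝ) := {θ | ∀ i j, i ≠ j → cos (θ i - θ j) ≠ 1}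

lemma isOpen_vortexDomain (N : ℕ) : IsOpen (vortexDomain N) := by
  simp only [vortexDomain, Set.ofPred_forall]
  refine isOpen_iInter_of_finite fun i => isOpen_iInter_of_finite fun j =>
    isOpen_iInter_of_finite fun _ => isOpen_ne_fun ?_ continuous_const
  fun_prop

lemma vortexPotential_eq_sum_pairPotential (N : ℕ) :
    vortexPotential N = fun θ => -∑ i, ∑ j ∈ Ioi i, pairPotential (θ i - θ j) := by
  ext θ
  simp [vortexPotential, pairPotential, ← Finset.sum_filter, filter_lt_eq_Ioi]

noncomputable def vortexGradient (N : ℕ) (θ : Fin N → ℝ) : (Fin N → ℝ) →L[ℝ] ℝ :=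
  -∑ i, ∑ j ∈ Ioi i, pairPotentialDeriv (θ i - θ j) • coordDiff i j

lemma hasFDerivAt_vortexPotential {θ : Fin N → ℝ} (hθ : θ ∈ vortexDomain N) :
    HasFDerivAt (vortexPotential N) (vortexGradient N θ) θ := by
  rw [vortexPotential_eq_sum_pairPotential]
  refine .neg (.fun_sum fun i _ => .fun_sum fun j hj => ?_)
  exact (hasDerivAt_pairPotential (hθ i j (mem_Ioi.1 hj).ne)).comp_hasFDerivAt θ
    (hasFDerivAt_coordDiff i j θ)

lemma hasFDerivAt_vortexGradient {θ : Fin N → ℝ} (hθ : θ ∈ vortexDomain N) :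
    HasFDerivAt (vortexGradient N) (-∑ i, ∑ j ∈ Ioi i,
      (pairPotentialDeriv2 (θ i - θ j) • coordDiff i j).smulRight (coordDiff i j)) θ := by
  refine .neg (.fun_sum fun i _ => .fun_sum fun j hj => ?_)
  exact ((hasDerivAt_pairPotentialDeriv (hθ i j (mem_Ioi.1 hj).ne)).comp_hasFDerivAt θ
    (hasFDerivAt_coordDiff i j θ)).smul_const (coordDiff i j)

lemma iteratedFDeriv_two_vortexPotential {θ : Fin N → ℝ} (hθ : θ ∈ vortexDomain N)
    (u v : Fin N → ℝ) :
    iteratedFDeriv ℝ 2 (vortexPotential N) θ ![u, v] =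
      -∑ i, ∑ j ∈ Ioi i, pairPotentialDeriv2 (θ i - θ j) * (u i - u j) * (v i - v j) := by
  have hgrad : fderiv ℝ (vortexPotential N) =ᶠ[nhds θ] vortexGradient N := by
    filter_upwards [(isOpen_vortexDomain N).mem_nhds hθ] with x hx
    exact (hasFDerivAt_vortexPotential hx).fderiv
  rw [iteratedFDeriv_two_apply, hgrad.fderiv_eq, (hasFDerivAt_vortexGradient hθ).fderiv]
  simp [mul_assoc]

end

lemma cos_two_pi_div_three : cos (2 * π / 3) = -(1 / 2) := by
  rw [show 2 * π / 3 = π - π / 3 by ring, cos_pi_sub, cos_pi_div_three]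

lemma cos_four_pi_div_three : cos (4 * π / 3) = -(1 / 2) := by
  rw [show 4 * π / 3 = π / 3 + π by ring, cos_add_pi, cos_pi_div_three]

local notation "threeGon" => (![0, 2 * π / 3, 4 * π / 3] : Fin 3 → ℝ)

lemma cos_threeGon_sub {i j : Fin 3} (hij : i ≠ j) :
    cos (threeGon i - threeGon j) = -(1 / 2) := by
  have h₁ : 2 * π / 3 - 4 * π / 3 = -(2 * π / 3) := by ring
  have h₂ : 4 * π / 3 - 2 * π / 3 = 2 * π / 3 := by ring
  fin_cases i <;> fin_cases j <;>
    simp [h₁, h₂, cos_two_pi_div_three, cos_four_pi_div_three] at hij ⊢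

lemma threeGon_mem_vortexDomain : threeGon ∈ vortexDomain 3 :=
  fun i j hij => by rw [cos_threeGon_sub hij]; norm_num

noncomputable def threeGonHessian : Matrix (Fin 3) (Fin 3) ℝ :=
  !![-1/3, 1/6, 1/6; 1/6, -1/3, 1/6; 1/6, 1/6, -1/3]

lemma vortexHessian_threeGon : vortexHessian 3 threeGon = threeGonHessian := by
  have hcurv : ∀ i j : Fin 3, i ≠ j → pairPotentialDeriv2 (threeGon i - threeGon j) = 1 / 6 := by
    intro i j hij
    rw [pairPotentialDeriv2, cos_threeGon_sub hij]
    norm_num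
  ext k l
  rw [vortexHessian, iteratedFDeriv_two_vortexPotential threeGon_mem_vortexDomain]
  rw [sum_congr rfl fun i _ => sum_congr rfl fun j hj => by rw [hcurv i j (mem_Ioi.1 hj).ne]]
  fin_cases k <;> fin_cases l <;>
    simp [← filter_lt_eq_Ioi, sum_filter, Fin.sum_univ_three, threeGonHessian, Pi.single_apply] <;>
    norm_num

lemma threeGonHessian_mulVec (v : Fin 3 → ℝ) :
    threeGonHessian *ᵥ v = fun i => (∑ j, v j) / 6 - v i / 2 := by
  ext i
  fin_cases i <;> simp [threeGonHessian, mulVec, dotProduct, Fin.sum_univ_three] <;> ring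

lemma threeGonHessian_mulVec_of_sum_eq_zero {v : Fin 3 → ℝ} (hv : ∑ j, v j = 0) :
    threeGonHessian *ᵥ v = (-1 / 2 : ℝ) • v := by
  ext i
  simp only [threeGonHessian_mulVec, hv, zero_div, zero_sub, Pi.smul_apply, smul_eq_mul]
  ring

lemma threeGonHessian_mulVec_eq_zero_iff (v : Fin 3 → ℝ) :
    threeGonHessian *ᵥ v = 0 ↔ ∃ c : ℝ, v = c • ![1, 1, 1] := by
  constructor
  · intro h
    have hconst : ∀ i, v i = (∑ j, v j) / 3 := fun i => by
      have := congrFun h i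
      simp only [threeGonHessian_mulVec, Pi.zero_apply] at this
      linarith
    exact ⟨(∑ j, v j) / 3, funext fun i => (hconst i).trans (by fin_cases i <;> simp)⟩
  · rintro ⟨c, rfl⟩
    ext i
    fin_cases i <;> simp [threeGonHessian_mulVec, Fin.sum_univ_three] <;> ring

lemma threeGonHessian_eigenvalue_iff (μ : ℝ) :
    (∃ v : Fin 3 → ℝ, v ≠ 0 ∧ threeGonHessian *ᵥ v = μ • v) ↔ μ = 0 ∨ μ = -1 / 2 := by
  constructor
  · rintro ⟨v, hv, heig⟩
    have h : ∀ i, (μ + 1 / 2) * v i = (∑ j, v j) / 6 := fun i => by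
      have := congrFun heig i
      simp only [threeGonHessian_mulVec, Pi.smul_apply, smul_eq_mul] at this
      linarith
    have hsum : μ * ∑ j, v j = 0 := by
      simp only [Fin.sum_univ_three] at h ⊢
      linear_combination h 0 + h 1 + h 2
    rcases mul_eq_zero.1 hsum with hμ | hs
    · exact .inl hμ
    · obtain ⟨i, hi⟩ := Function.ne_iff.1 hv
      have := h i
      rw [hs, zero_div] at this
      exact .inr (by linarith [(mul_eq_zero.1 this).resolve_right hi])
  · rintro (rfl | rfl)
    · refine ⟨![1, 1, 1], by simp, ?_⟩
      rw [zero_smul, threeGonHessian_mulVec_eq_zero_iff]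
      exact ⟨1, by simp⟩
    · refine ⟨![1, -1, 0], by simp, threeGonHessian_mulVec_of_sum_eq_zero ?_⟩
      simp [Fin.sum_univ_three]

lemma exists_linearIndependent_threeGonHessian_eigenvectors :
    ∃ v w : Fin 3 → ℝ, LinearIndependent ℝ ![v, w] ∧
      threeGonHessian *ᵥ v = (-1 / 2 : ℝ) • v ∧ threeGonHessian *ᵥ w = (-1 / 2 : ℝ) • w := by
  refine ⟨![1, -1, 0], ![1, 0, -1], ?_,
    threeGonHessian_mulVec_of_sum_eq_zero (by simp [Fin.sum_univ_three]),
    threeGonHessian_mulVec_of_sum_eq_zero (by simp [Fin.sum_univ_three])⟩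
  rw [linearIndependent_fin2]
  refine ⟨by simp, fun a h => ?_⟩
  simpa using congrFun h 1

lemma posSemidef_neg_threeGonHessian : (-threeGonHessian).PosSemidef := by
  rw [posSemidef_iff_dotProduct_mulVec]
  refine ⟨?_, fun x => ?_⟩
  · refine IsHermitian.neg ?_
    ext i j
    fin_cases i <;> fin_cases j <;> simp [threeGonHessian]
  · simp only [neg_mulVec, threeGonHessian_mulVec, dotProduct, star_trivial, Fin.sum_univ_three,
      Pi.neg_apply]
    nlinarith [sq_nonneg (x 0 - x 1), sq_nonneg (x 0 - x 2), sq_nonneg (x 1 - x 2)]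

/-- For `N = 3` and the regular 3-gon `θ = (0, 2π/3, 4π/3)`, the Hessian
of `V` at `θ` has all off-diagonal entries `1/6` and all diagonal entries `-1/3`; its
eigenvalues are `0, -1/2, -1/2` (`-1/2` with multiplicity two), and it is negative
semidefinite with one-dimensional kernel spanned by `(1,1,1)`, so the 3-gon is a
nondegenerate local maximum of `V`. -/
theorem three_gon_maximum :
    vortexHessian 3 ![0, 2 * π / 3, 4 * π / 3] =
      !![-1/3, 1/6, 1/6; 1/6, -1/3, 1/6; 1/6, 1/6, -1/3] ∧
    (∀ μ : ℝ, (∃ v : Fin 3 → ℝ, v ≠ 0 ∧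
        (vortexHessian 3 ![0, 2 * π / 3, 4 * π / 3]).mulVec v = μ • v) ↔
      (μ = 0 ∨ μ = -1/2)) ∧
    (∃ v w : Fin 3 → ℝ, LinearIndependent ℝ ![v, w] ∧
      (vortexHessian 3 ![0, 2 * π / 3, 4 * π / 3]).mulVec v = (-1/2 : ℝ) • v ∧
      (vortexHessian 3 ![0, 2 * π / 3, 4 * π / 3]).mulVec w = (-1/2 : ℝ) • w) ∧
    (-(vortexHessian 3 ![0, 2 * π / 3, 4 * π / 3])).PosSemidef ∧
    (∀ v : Fin 3 → ℝ, (vortexHessian 3 ![0, 2 * π / 3, 4 * π / 3]).mulVec v = 0 ↔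
      ∃ c : ℝ, v = c • ![1, 1, 1]) := by
  rw [vortexHessian_threeGon]
  exact ⟨rfl, threeGonHessian_eigenvalue_iff,
    exists_linearIndependent_threeGonHessian_eigenvectors, posSemidef_neg_threeGonHessian,
    threeGonHessian_mulVec_eq_zero_iff⟩
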